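/- In the Witt setup, let a : R⊗M → V⊗M be any k-linear map, write a(f⊗x) = Σ_{i=1}^n x_i ⊗ a_i(f⊗x) with a_i(f⊗x) ∈ M, and define ρ_a : Der_k(R) → End_k(M) by ρ_a(D)(x) = Σ_{i=1}^n a_i(D(x_i)⊗x) (recall every k-derivation D of R equals Σ_i D(x_i)·∂/∂x_i). Then ρ_a is a Lie algebra homomorphism from the Lie algebra Der_k(R) of k-derivations of R (with the commutator bracket) to End_k(M) (i.e., ρ_a(D∘D′−D′∘D) = ρ_a(D)ρ_a(D′) − ρ_a(D′)ρ_a(D) for all derivations D,D′) if and only if a satisfies the curried Witt identity. -/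

import Mathlib

open TensorProduct

set_option maxSynthPendingDepth 3
set_option synthInstance.maxHeartbeats 400000
set_option maxHeartbeats 1000000

namespace CurriedWitt

variable (k : Type) [CommRing k] (n : ℕ)

/-- `R = k[x_1, …, x_n]`. -/
abbrev R := MvPolynomial (Fin n) k

/-- `V ⊆ R`: the free `k`-submodule spanned by the variables `x_1, …, x_n`. -/
noncomputable def V : Submodule k (R k n) :=
  Submodule.span k (Set.range (MvPolynomial.X : Fin n → R k n))

/-- The variable `x_i` as an element of `V`. -/
noncomputable def xV (i : Fin n) : V k n :=
  ⟨MvPolynomial.X i, Submodule.subset_span ⟨i, rfl⟩⟩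

variable (M : Type) [AddCommGroup M] [Module k M]

/-- `Δ_W : R → V ⊗ R`, `f ↦ ∑ᵢ xᵢ ⊗ ∂f/∂xᵢ`. -/
noncomputable def ΔW : R k n →ₗ[k] (V k n) ⊗[k] (R k n) :=
  ∑ i : Fin n, (TensorProduct.mk k (V k n) (R k n) (xV k n i)) ∘ₗ
    (MvPolynomial.pderiv i).toLinearMap

/-- The braiding `τ_{P,Q} ⊗ id_M : P ⊗ (Q ⊗ M) → Q ⊗ (P ⊗ M)`. -/
noncomputable def swapL (P Q : Type) [AddCommGroup P] [Module k P]
    [AddCommGroup Q] [Module k Q] :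
    P ⊗[k] (Q ⊗[k] M) →ₗ[k] Q ⊗[k] (P ⊗[k] M) :=
  (TensorProduct.assoc k Q P M).toLinearMap ∘ₗ
    LinearMap.rTensor M (TensorProduct.comm k P Q).toLinearMap ∘ₗ
    (TensorProduct.assoc k P Q M).symm.toLinearMap

variable {k n M}

/-- `a′ = (id_V ⊗ a) ∘ (id_V ⊗ m ⊗ id_M) ∘ (τ_{R,V} ⊗ id_{R⊗M}) ∘ (id_R ⊗ Δ_W ⊗ id_M)`. -/
noncomputable def aPrime (a : (R k n) ⊗[k] M →ₗ[k] (V k n) ⊗[k] M) :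
    (R k n) ⊗[k] ((R k n) ⊗[k] M) →ₗ[k] (V k n) ⊗[k] ((V k n) ⊗[k] M) :=
  LinearMap.lTensor (V k n) a ∘ₗ
    LinearMap.lTensor (V k n)
      (LinearMap.rTensor M (LinearMap.mul' k (R k n)) ∘ₗ
        (TensorProduct.assoc k (R k n) (R k n) M).symm.toLinearMap) ∘ₗ
    swapL k ((R k n) ⊗[k] M) (R k n) (V k n) ∘ₗ
    LinearMap.lTensor (R k n)
      ((TensorProduct.assoc k (V k n) (R k n) M).toLinearMap ∘ₗ
        LinearMap.rTensor M (ΔW k n))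

/-- `a″ = (τ_{V,V} ⊗ id_M) ∘ a′ ∘ (τ_{R,R} ⊗ id_M)`. -/
noncomputable def aDoublePrime (a : (R k n) ⊗[k] M →ₗ[k] (V k n) ⊗[k] M) :
    (R k n) ⊗[k] ((R k n) ⊗[k] M) →ₗ[k] (V k n) ⊗[k] ((V k n) ⊗[k] M) :=
  swapL k M (V k n) (V k n) ∘ₗ aPrime a ∘ₗ swapL k M (R k n) (R k n)

/-- `a₁^X = (τ_{X,V} ⊗ id_M) ∘ (id_X ⊗ a) ∘ (τ_{R,X} ⊗ id_M) : R ⊗ X ⊗ M → V ⊗ X ⊗ M`. -/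
noncomputable def aOne (a : (R k n) ⊗[k] M →ₗ[k] (V k n) ⊗[k] M)
    (X : Type) [AddCommGroup X] [Module k X] :
    (R k n) ⊗[k] (X ⊗[k] M) →ₗ[k] (V k n) ⊗[k] (X ⊗[k] M) :=
  swapL k M X (V k n) ∘ₗ LinearMap.lTensor X a ∘ₗ swapL k M (R k n) X

/-- The curried Witt identity `[a₁, a₂] = a′ − a″` for a map `a : R ⊗ M → V ⊗ M`,
where `a₂ = id_R ⊗ a` and `[a₁,a₂] = a₁^V ∘ a₂ − (id_V ⊗ a) ∘ a₁^R`. -/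
noncomputable def CurriedWittIdentity (a : (R k n) ⊗[k] M →ₗ[k] (V k n) ⊗[k] M) : Prop :=
  let lhs : (R k n) ⊗[k] ((R k n) ⊗[k] M) →ₗ[k] (V k n) ⊗[k] ((V k n) ⊗[k] M) :=
    aOne a ↥(V k n) ∘ₗ LinearMap.lTensor (R k n) a -
      LinearMap.lTensor ↥(V k n) a ∘ₗ aOne a (R k n)
  lhs = aPrime a - aDoublePrime a

end CurriedWitt

open CurriedWitt

/-!
Evaluating the curried Witt identity on `f ⊗ g ⊗ x` and reading off the coefficient of
`xᵢ ⊗ xⱼ` (the `xᵢ` form a basis of `V`) turns it into the identity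
`aᵢ(f ⊗ aⱼ(g ⊗ x)) - aⱼ(g ⊗ aᵢ(f ⊗ x)) = aⱼ(f ∂ᵢg ⊗ x) - aᵢ(g ∂ⱼf ⊗ x)` for all `i, j, f, g, x`.
On the other side, `ρ_a` is additive and every derivation is the finite sum `∑ᵢ D(xᵢ) ∂ᵢ`, so
`ρ_a` preserves brackets iff it does so on the derivations `f ∂ᵢ`. Since
`⁅f ∂ᵢ, g ∂ⱼ⁆ = f ∂ᵢg ∂ⱼ - g ∂ⱼf ∂ᵢ` and `ρ_a(f ∂ᵢ) x = aᵢ(f ⊗ x)`, this is the same identity.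
-/

theorem map_lie_eq_commutator_iff_of_closure_eq_top {L A ι : Type*} [LieRing L] [Ring A]
    (f : L →+ A) (e : ι → L) (he : AddSubgroup.closure (Set.range e) = ⊤) :
    (∀ x y, f ⁅x, y⁆ = f x * f y - f y * f x) ↔
      ∀ a b, f ⁅e a, e b⁆ = f (e a) * f (e b) - f (e b) * f (e a) := by
  refine ⟨fun h a b => h (e a) (e b), fun h x y => ?_⟩
  have hx : x ∈ AddSubgroup.closure (Set.range e) := he ▸ AddSubgroup.mem_top x
  have hy : y ∈ AddSubgroup.closure (Set.range e) := he ▸ AddSubgroup.mem_top y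
  induction hx, hy using AddSubgroup.closure_induction₂ with
  | mem x y hx hy => obtain ⟨⟨a, rfl⟩, ⟨b, rfl⟩⟩ := And.intro hx hy; exact h a b
  | zero_left => simp
  | zero_right => simp
  | add_left _ _ _ _ _ _ h₁ h₂ => simp only [add_lie, map_add, h₁, h₂, add_mul, mul_add]; abel
  | add_right _ _ _ _ _ _ h₁ h₂ => simp only [lie_add, map_add, h₁, h₂, add_mul, mul_add]; abel
  | neg_left _ _ _ _ h₁ => simp only [neg_lie, map_neg, h₁, neg_mul, mul_neg]; abel
  | neg_right _ _ _ _ h₁ => simp only [lie_neg, map_neg, h₁, neg_mul, mul_neg]; abel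

namespace MvPolynomial

variable {R σ : Type*}

theorem derivation_eq_sum_smul_pderiv [CommSemiring R] [Fintype σ]
    (D : Derivation R (MvPolynomial σ R) (MvPolynomial σ R)) :
    D = ∑ i, D (X i) • pderiv i := by
  classical
  refine derivation_ext fun j => ?_
  have hsum := congrFun (map_sum Derivation.coeFnAddMonoidHom
    (fun i => D (X i) • (pderiv i : Derivation R (MvPolynomial σ R) (MvPolynomial σ R)))
    Finset.univ) (X j)
  simp only [Derivation.coeFnAddMonoidHom_apply, Finset.sum_apply] at hsum
  simp [hsum, pderiv_X, Pi.single_apply]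

variable [CommRing R]

theorem closure_smul_pderiv_eq_top [Finite σ] :
    AddSubgroup.closure (Set.range fun p : σ × MvPolynomial σ R =>
      p.2 • (pderiv p.1 : Derivation R (MvPolynomial σ R) (MvPolynomial σ R))) = ⊤ := by
  have := Fintype.ofFinite σ
  refine eq_top_iff.2 fun D _ => ?_
  rw [derivation_eq_sum_smul_pderiv D]
  exact AddSubgroup.sum_mem _ fun i _ => AddSubgroup.subset_closure ⟨(i, D (X i)), rfl⟩

theorem lie_smul_pderiv_smul_pderiv (f g : MvPolynomial σ R) (i j : σ) :
    ⁅f • (pderiv i : Derivation R (MvPolynomial σ R) (MvPolynomial σ R)), g • pderiv j⁆ =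
      (f * pderiv i g) • pderiv (R := R) j - (g * pderiv j f) • pderiv (R := R) i := by
  classical
  refine derivation_ext fun m => ?_
  simp only [Derivation.commutator_apply, Derivation.coe_sub, Pi.sub_apply, Derivation.smul_apply,
    smul_eq_mul, pderiv_X, Pi.single_apply, mul_ite, mul_one, mul_zero]
  split_ifs <;> simp [sub_eq_neg_add]

end MvPolynomial

theorem Module.Basis.sum_tmul_injective {R N P ι : Type*} [CommRing R] [AddCommGroup N]
    [Module R N] [AddCommGroup P] [Module R P] [Fintype ι] (b : Module.Basis ι R N) :
    Function.Injective fun m : ι → P => ∑ i, b i ⊗ₜ[R] m i := by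
  intro m m' h
  have := TensorProduct.sum_tmul_basis_left_injective (N := P) b
    (a₁ := Finsupp.equivFunOnFinite.symm m) (a₂ := Finsupp.equivFunOnFinite.symm m')
    (by simpa [Finsupp.lsum_apply, Finsupp.sum_fintype] using h)
  simpa using this

namespace CurriedWitt

open MvPolynomial

variable {k : Type} [CommRing k] {n : ℕ} {M : Type} [AddCommGroup M] [Module k M]

variable (k n) in
noncomputable def basisV : Module.Basis (Fin n) k (V k n) :=
  .span (linearIndependent_X (Fin n) k)

@[simp]
theorem basisV_apply (i : Fin n) : basisV k n i = xV k n i :=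
  Module.Basis.span_apply _ i

theorem sum_xV_tmul_injective {P : Type} [AddCommGroup P] [Module k P] :
    Function.Injective fun m : Fin n → P => ∑ i, xV k n i ⊗ₜ[k] m i := by
  simpa using (basisV k n).sum_tmul_injective (P := P)

theorem sum_sum_xV_tmul_injective :
    Function.Injective fun F : Fin n → Fin n → M =>
      ∑ i, ∑ j, xV k n i ⊗ₜ[k] (xV k n j ⊗ₜ[k] F i j) := by
  intro F F' h
  simp only [← tmul_sum] at h
  funext i
  exact sum_xV_tmul_injective (congrFun (sum_xV_tmul_injective h) i)

theorem swapL_tmul (P Q : Type) [AddCommGroup P] [Module k P] [AddCommGroup Q] [Module k Q]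
    (p : P) (q : Q) (x : M) :
    swapL k M P Q (p ⊗ₜ (q ⊗ₜ x)) = q ⊗ₜ (p ⊗ₜ x) := by
  simp [swapL]

theorem ΔW_apply (g : R k n) : ΔW k n g = ∑ i, xV k n i ⊗ₜ[k] pderiv i g := by
  simp [ΔW]

section Components

variable (a : R k n ⊗[k] M →ₗ[k] V k n ⊗[k] M) (aC : Fin n → (R k n ⊗[k] M →ₗ[k] M))
  (ha : ∀ z, a z = ∑ i, xV k n i ⊗ₜ[k] aC i z)
include ha

theorem aOne_tmul (X : Type) [AddCommGroup X] [Module k X] (f : R k n) (ξ : X) (x : M) :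
    aOne a X (f ⊗ₜ (ξ ⊗ₜ x)) = ∑ i, xV k n i ⊗ₜ (ξ ⊗ₜ aC i (f ⊗ₜ x)) := by
  simp [aOne, swapL_tmul, ha, tmul_sum]

theorem aPrime_tmul (f g : R k n) (x : M) :
    aPrime a (f ⊗ₜ (g ⊗ₜ x)) =
      ∑ i, ∑ j, xV k n i ⊗ₜ (xV k n j ⊗ₜ aC j ((f * pderiv i g) ⊗ₜ x)) := by
  simp [aPrime, ΔW_apply, sum_tmul, tmul_sum, swapL_tmul, ha]

theorem aDoublePrime_tmul (f g : R k n) (x : M) :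
    aDoublePrime a (f ⊗ₜ (g ⊗ₜ x)) =
      ∑ i, ∑ j, xV k n i ⊗ₜ (xV k n j ⊗ₜ aC i ((g * pderiv j f) ⊗ₜ x)) := by
  simp only [aDoublePrime, LinearMap.comp_apply, swapL_tmul, aPrime_tmul a aC ha, map_sum]
  exact Finset.sum_comm

theorem bracket_tmul (f g : R k n) (x : M) :
    (aOne a (V k n) ∘ₗ (a.lTensor (R k n)) - (a.lTensor (V k n)) ∘ₗ aOne a (R k n))
        (f ⊗ₜ (g ⊗ₜ x)) =
      ∑ i, ∑ j, xV k n i ⊗ₜ (xV k n j ⊗ₜ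
        (aC i (f ⊗ₜ aC j (g ⊗ₜ x)) - aC j (g ⊗ₜ aC i (f ⊗ₜ x)))) := by
  simp only [LinearMap.sub_apply, LinearMap.comp_apply, LinearMap.lTensor_tmul, ha, tmul_sum,
    map_sum, aOne_tmul a aC ha, tmul_sub, Finset.sum_sub_distrib]
  rw [Finset.sum_comm]

end Components

def WittComponents (aC : Fin n → (R k n ⊗[k] M →ₗ[k] M)) : Prop :=
  ∀ (i j : Fin n) (f g : R k n) (x : M),
    aC j ((f * pderiv i g) ⊗ₜ x) - aC i ((g * pderiv j f) ⊗ₜ x) =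
      aC i (f ⊗ₜ aC j (g ⊗ₜ x)) - aC j (g ⊗ₜ aC i (f ⊗ₜ x))

theorem curriedWittIdentity_iff (a : R k n ⊗[k] M →ₗ[k] V k n ⊗[k] M)
    (aC : Fin n → (R k n ⊗[k] M →ₗ[k] M)) (ha : ∀ z, a z = ∑ i, xV k n i ⊗ₜ[k] aC i z) :
    CurriedWittIdentity a ↔ WittComponents aC := by
  have on_tmul : ∀ f g x, (aOne a (V k n) ∘ₗ (a.lTensor (R k n)) -
      (a.lTensor (V k n)) ∘ₗ aOne a (R k n)) (f ⊗ₜ (g ⊗ₜ x)) =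
        (aPrime a - aDoublePrime a) (f ⊗ₜ (g ⊗ₜ x)) ↔
      ∀ i j, aC i (f ⊗ₜ aC j (g ⊗ₜ x)) - aC j (g ⊗ₜ aC i (f ⊗ₜ x)) =
        aC j ((f * pderiv i g) ⊗ₜ x) - aC i ((g * pderiv j f) ⊗ₜ x) := by
    intro f g x
    rw [bracket_tmul a aC ha, LinearMap.sub_apply, aPrime_tmul a aC ha, aDoublePrime_tmul a aC ha]
    simp only [← Finset.sum_sub_distrib, ← tmul_sub, sum_sum_xV_tmul_injective.eq_iff, funext_iff]
  refine ⟨fun h i j f g x => ((on_tmul f g x).1 (by rw [h]) i j).symm,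
    fun h => TensorProduct.ext_threefold' fun f g x => (on_tmul f g x).2 fun i j => ?_⟩
  exact (h i j f g x).symm

noncomputable def rho (aC : Fin n → (R k n ⊗[k] M →ₗ[k] M)) :
    Derivation k (R k n) (R k n) →+ Module.End k M :=
  AddMonoidHom.mk' (fun D => ∑ i, aC i ∘ₗ TensorProduct.mk k (R k n) M (D (X i)))
    fun D D' => by simp [Finset.sum_add_distrib, LinearMap.comp_add]

theorem rho_smul_pderiv (aC : Fin n → (R k n ⊗[k] M →ₗ[k] M)) (i : Fin n) (f : R k n) (x : M) :
    rho aC (f • pderiv i) x = aC i (f ⊗ₜ x) := by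
  classical
  simp [rho, pderiv_X, Pi.single_apply, ite_tmul, apply_ite (aC _)]

theorem rho_lie_iff (aC : Fin n → (R k n ⊗[k] M →ₗ[k] M)) :
    (∀ D D' : Derivation k (R k n) (R k n),
      rho aC ⁅D, D'⁆ = rho aC D * rho aC D' - rho aC D' * rho aC D) ↔ WittComponents aC := by
  refine (map_lie_eq_commutator_iff_of_closure_eq_top (rho aC)
    (fun p : Fin n × R k n => p.2 • (pderiv p.1 : Derivation k (R k n) (R k n)))
    closure_smul_pderiv_eq_top).trans ?_
  simp only [Prod.forall, lie_smul_pderiv_smul_pderiv, map_sub]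
  simp only [LinearMap.ext_iff, LinearMap.sub_apply, Module.End.mul_apply, rho_smul_pderiv]
  exact ⟨fun h i j f g x => h i f j g x, fun h i f j g x => h i j f g x⟩

end CurriedWitt

/-- Let `a : R ⊗ M → V ⊗ M` be a `k`-linear map, write
`a(f ⊗ x) = ∑ᵢ xᵢ ⊗ aᵢ(f ⊗ x)`, and define `ρ_a : Der_k(R) → End_k(M)` by
`ρ_a(D)(x) = ∑ᵢ aᵢ(D(xᵢ) ⊗ x)` (recall every `k`-derivation `D` of `R` equals
`∑ᵢ D(xᵢ)·∂/∂xᵢ`).  Then `ρ_a` is a Lie algebra homomorphism from the Lie algebra of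
`k`-derivations of `R` (with the commutator bracket) to `End_k(M)` if and only if `a`
satisfies the curried Witt identity. -/
theorem statement6 (k : Type) [CommRing k] (n : ℕ) (M : Type) [AddCommGroup M] [Module k M]
    (a : (R k n) ⊗[k] M →ₗ[k] (V k n) ⊗[k] M)
    (aC : Fin n → ((R k n) ⊗[k] M →ₗ[k] M))
    (ha : ∀ z : (R k n) ⊗[k] M, a z = ∑ i : Fin n, (xV k n i) ⊗ₜ[k] (aC i z))
    (ρ : Derivation k (R k n) (R k n) → (M →ₗ[k] M))
    (hρ : ∀ (D : Derivation k (R k n) (R k n)),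
      ρ D = ∑ i : Fin n, (aC i) ∘ₗ (TensorProduct.mk k (R k n) M (D (MvPolynomial.X i)))) :
    (∀ D D' : Derivation k (R k n) (R k n),
        ρ ⁅D, D'⁆ = ρ D ∘ₗ ρ D' - ρ D' ∘ₗ ρ D) ↔
      CurriedWittIdentity a := by
  obtain rfl : ρ = rho aC := funext hρ
  exact (rho_lie_iff aC).trans (curriedWittIdentity_iff a aC ha).symm
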